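/- For every α ∈ (0,1), every integer k ≥ 0, and every x ∈ [0, α^p], one has 0 < f̃_k(x) ≤ α·(1 + ε_k), where ε_k = (1 − α_k)/(1 + α_k). -/

import Mathlib

/-- `mu p t = ((t - t^p)/((p-1)(1-t)))^(1/p)`, the real positive `p`th root. -/
noncomputable def mu (p : ℕ) (t : ℝ) : ℝ :=
  ((t - t ^ p) / (((p : ℝ) - 1) * (1 - t))) ^ ((1 : ℝ) / p)

/-- The sequence `α_0 = α`, `α_{k+1} = p α_k / ((p-1) μ(α_k) + μ(α_k)^(1-p) α_k^p)`. -/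
noncomputable def alphaSeq (p : ℕ) (α : ℝ) : ℕ → ℝ
  | 0 => α
  | k + 1 =>
      (p : ℝ) * alphaSeq p α k /
        (((p : ℝ) - 1) * mu p (alphaSeq p α k) +
          alphaSeq p α k ^ p / mu p (alphaSeq p α k) ^ (p - 1))

/-- `f_0(x) = 1`, `f_{k+1}(x) = (1/p)((p-1) μ(α_k) f_k(x) + x/(μ(α_k)^(p-1) f_k(x)^(p-1)))`. -/
noncomputable def fSeq (p : ℕ) (α : ℝ) : ℕ → ℝ → ℝ
  | 0, _ => 1
  | k + 1, x =>
      (1 / (p : ℝ)) *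
        (((p : ℝ) - 1) * mu p (alphaSeq p α k) * fSeq p α k x +
          x / (mu p (alphaSeq p α k) ^ (p - 1) * fSeq p α k x ^ (p - 1)))

/-- The scaled iterate `f̃_k(x) = (2 α_k/(1+α_k)) f_k(x)`. -/
noncomputable def ftilde (p : ℕ) (α : ℝ) (k : ℕ) (x : ℝ) : ℝ :=
  (2 * alphaSeq p α k / (1 + alphaSeq p α k)) * fSeq p α k x


/-- `(m+1)(1-t) t^(m+2) < t - t^(m+2)` for `t ∈ (0,1)`. -/
lemma auxGeom (m : ℕ) {t : ℝ} (ht0 : 0 < t) (ht1 : t < 1) :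
    ((m : ℝ) + 1) * (1 - t) * t ^ (m + 2) < t - t ^ (m + 2) := by
  induction m with
  | zero =>
      push_cast
      nlinarith [mul_pos ht0 (mul_pos (sub_pos.2 ht1) (sub_pos.2 ht1))]
  | succ n ih =>
      have hp : (0 : ℝ) < t ^ (n + 2) := pow_pos ht0 _
      have h1 : t ^ (n + 3) = t ^ (n + 2) * t := by ring
      push_cast
      push_cast at ih
      nlinarith [mul_pos hp (sub_pos.2 ht1),
        mul_nonneg (mul_nonneg (by positivity : (0:ℝ) ≤ (n:ℝ)+2)
          (mul_nonneg (sub_pos.2 ht1).le hp.le)) (sub_pos.2 ht1).le]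

/-- `(m+2) r < (m+1) + r^(m+2)` for `r ∈ (0,1)`. -/
lemma auxAMGM (m : ℕ) {r : ℝ} (hr0 : 0 < r) (hr1 : r < 1) :
    ((m : ℝ) + 2) * r < ((m : ℝ) + 1) + r ^ (m + 2) := by
  induction m with
  | zero => push_cast; nlinarith [sq_nonneg (1 - r)]
  | succ n ih =>
      have h1 : r ^ (n + 3) = r ^ (n + 2) * r := by ring
      have h2 : r ^ (n + 2) ≤ 1 := pow_le_one₀ hr0.le hr1.le
      push_cast
      push_cast at ih
      nlinarith [mul_nonneg (sub_nonneg.2 hr1.le) (sub_nonneg.2 h2)]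

lemma mu_props (m : ℕ) {t : ℝ} (ht0 : 0 < t) (ht1 : t < 1) :
    0 < mu (m + 2) t ∧
    ((m : ℝ) + 1) * (1 - t) * (mu (m + 2) t) ^ (m + 2) = t - t ^ (m + 2) ∧
    t < mu (m + 2) t := by
  have h1t : (0 : ℝ) < 1 - t := by linarith
  have hnum : 0 < t - t ^ (m + 2) := by
    have h := pow_lt_pow_right_of_lt_one₀ ht0 ht1 (show 1 < m + 2 by omega)
    rw [pow_one] at h; linarith
  have hcast : (((m + 2 : ℕ) : ℝ)) - 1 = (m : ℝ) + 1 := by push_cast; ring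
  have hden : (0 : ℝ) < (((m + 2 : ℕ) : ℝ) - 1) * (1 - t) := by
    rw [hcast]; positivity
  set A : ℝ := (t - t ^ (m + 2)) / ((((m + 2 : ℕ) : ℝ) - 1) * (1 - t)) with hA_def
  have hA : 0 < A := div_pos hnum hden
  have hmueq : mu (m + 2) t = A ^ ((1 : ℝ) / ((m + 2 : ℕ) : ℝ)) := rfl
  have hμ0 : 0 < mu (m + 2) t := by rw [hmueq]; exact Real.rpow_pos_of_pos hA _
  have hne : ((m + 2 : ℕ) : ℝ) ≠ 0 := by positivity
  have hpow : (mu (m + 2) t) ^ (m + 2) = A := by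
    rw [hmueq, ← Real.rpow_natCast (A ^ ((1 : ℝ) / ((m + 2 : ℕ) : ℝ))) (m + 2),
      ← Real.rpow_mul hA.le, one_div, inv_mul_cancel₀ hne, Real.rpow_one]
  have hkey : ((m : ℝ) + 1) * (1 - t) * (mu (m + 2) t) ^ (m + 2) = t - t ^ (m + 2) := by
    rw [hpow, hA_def, hcast]
    field_simp
  refine ⟨hμ0, hkey, ?_⟩
  have hlt : t ^ (m + 2) < (mu (m + 2) t) ^ (m + 2) := by
    rw [hpow, hA_def, lt_div_iff₀ hden, hcast]
    nlinarith [auxGeom m ht0 ht1]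
  exact lt_of_pow_lt_pow_left₀ (m + 2) hμ0.le hlt


/-- Convexity inequality: for `t ≤ s ≤ 1`, `(1-t) s^(m+2) ≤ (1-t^(m+2)) s - t + t^(m+2)`. -/
lemma omega_nonneg (m : ℕ) {t s : ℝ} (ht0 : 0 < t) (ht1 : t < 1) (hts : t ≤ s) (hs1 : s ≤ 1) :
    (1 - t) * s ^ (m + 2) ≤ (1 - t ^ (m + 2)) * s - t + t ^ (m + 2) := by
  have h1t : (0 : ℝ) < 1 - t := by linarith
  have ha : 0 ≤ (1 - s) / (1 - t) := div_nonneg (by linarith) h1t.le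
  have hb : 0 ≤ (s - t) / (1 - t) := div_nonneg (by linarith) h1t.le
  have hab : (1 - s) / (1 - t) + (s - t) / (1 - t) = 1 := by field_simp; ring
  have hconv := (convexOn_pow (m + 2)).2 (Set.mem_Ici.2 ht0.le)
    (Set.mem_Ici.2 (zero_le_one)) ha hb hab
  simp only [smul_eq_mul, mul_one, one_pow] at hconv
  have hpt : (1 - s) / (1 - t) * t + (s - t) / (1 - t) = s := by field_simp; ring
  rw [hpt] at hconv
  have h2 : (1 - t) * s ^ (m + 2) ≤ (1 - s) * t ^ (m + 2) + (s - t) :=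
    calc (1 - t) * s ^ (m + 2)
        ≤ (1 - t) * ((1 - s) / (1 - t) * t ^ (m + 2) + (s - t) / (1 - t)) :=
          mul_le_mul_of_nonneg_left hconv h1t.le
      _ = (1 - s) * t ^ (m + 2) + (s - t) := by field_simp
  exact h2.trans_eq (by ring)

/-- The core inequality `E' ≥ 0`. -/
lemma Eprime_nonneg (m : ℕ) {t α f x : ℝ} (ht0 : 0 < t) (ht1 : t < 1)
    (hα0 : 0 < α) (hf0 : 0 < f) (hgf : t * f ≤ α)
    (hx0 : 0 ≤ x) (hxα : x ≤ α ^ (m + 2)) (hxf : x ≤ f ^ (m + 2)) :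
    0 ≤ (t - t ^ (m + 2)) * (α * f ^ (m + 1) - t * f ^ (m + 2)) +
        (1 - t) * (α * t ^ (m + 2) * f ^ (m + 1) - t * x) := by
  have h1t : (0 : ℝ) < 1 - t := by linarith
  have htp1 : t ^ (m + 2) ≤ 1 := pow_le_one₀ ht0.le ht1.le
  rcases le_total f α with hfa | haf
  · -- case f ≤ α : use x ≤ f^(m+2)
    have p1 : 0 ≤ (1 - t) * t * (f ^ (m + 2) - x) :=
      mul_nonneg (mul_nonneg h1t.le ht0.le) (sub_nonneg.2 hxf)
    have p2 : 0 ≤ t * (1 - t ^ (m + 2)) * (α - f) * f ^ (m + 1) :=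
      mul_nonneg (mul_nonneg (mul_nonneg ht0.le (sub_nonneg.2 htp1))
        (sub_nonneg.2 hfa)) (pow_nonneg hf0.le _)
    have hdec : (t - t ^ (m + 2)) * (α * f ^ (m + 1) - t * f ^ (m + 2)) +
        (1 - t) * (α * t ^ (m + 2) * f ^ (m + 1) - t * x) =
        t * (1 - t ^ (m + 2)) * (α - f) * f ^ (m + 1) + (1 - t) * t * (f ^ (m + 2) - x) := by
      ring
    rw [hdec]
    exact add_nonneg p2 p1
  · -- case α ≤ f : use x ≤ α^(m+2) and convexity
    have hts : t ≤ α / f := (le_div_iff₀ hf0).2 hgf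
    have hs1 : α / f ≤ 1 := (div_le_one hf0).2 haf
    have hom := omega_nonneg m ht0 ht1 hts hs1
    have hc : (0 : ℝ) < t * f ^ (m + 2) := mul_pos ht0 (pow_pos hf0 _)
    have hmul := mul_le_mul_of_nonneg_left hom hc.le
    have e1 : t * f ^ (m + 2) * ((1 - t) * (α / f) ^ (m + 2)) = (1 - t) * t * α ^ (m + 2) := by
      rw [div_pow]; field_simp
    have e2 : t * f ^ (m + 2) * ((1 - t ^ (m + 2)) * (α / f) - t + t ^ (m + 2)) =
        t * (1 - t ^ (m + 2)) * α * f ^ (m + 1) - t ^ 2 * f ^ (m + 2)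
          + t ^ (m + 3) * f ^ (m + 2) := by
      field_simp; ring
    rw [e1, e2] at hmul
    have p3 : 0 ≤ (1 - t) * t * (α ^ (m + 2) - x) :=
      mul_nonneg (mul_nonneg h1t.le ht0.le) (sub_nonneg.2 hxα)
    have hdec : (t - t ^ (m + 2)) * (α * f ^ (m + 1) - t * f ^ (m + 2)) +
        (1 - t) * (α * t ^ (m + 2) * f ^ (m + 1) - t * x) =
        (t * (1 - t ^ (m + 2)) * α * f ^ (m + 1) - t ^ 2 * f ^ (m + 2)
          + t ^ (m + 3) * f ^ (m + 2) - (1 - t) * t * α ^ (m + 2))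
        + (1 - t) * t * (α ^ (m + 2) - x) := by ring
    rw [hdec]
    have := sub_nonneg.2 hmul
    linarith [p3, this]

lemma inv_lemma (m : ℕ) (α : ℝ) (hα : α ∈ Set.Ioo (0 : ℝ) 1) (k : ℕ) :
    alphaSeq (m + 2) α k ∈ Set.Ioo (0 : ℝ) 1 ∧
    ∀ x ∈ Set.Icc (0 : ℝ) (α ^ (m + 2)),
      0 < fSeq (m + 2) α k x ∧
      alphaSeq (m + 2) α k * fSeq (m + 2) α k x ≤ α ∧
      x ≤ fSeq (m + 2) α k x ^ (m + 2) := by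
  obtain ⟨hα0, hα1⟩ := hα
  induction k with
  | zero =>
      refine ⟨⟨hα0, hα1⟩, fun x hx => ?_⟩
      obtain ⟨hx0, hx1⟩ := hx
      have hα2 : α ^ (m + 2) ≤ 1 := pow_le_one₀ hα0.le hα1.le
      refine ⟨by simp [fSeq], by simp [alphaSeq, fSeq, hα1.le], ?_⟩
      show x ≤ (1 : ℝ) ^ (m + 2)
      simpa using hx1.trans hα2
  | succ k ih =>
      obtain ⟨⟨ht0, ht1⟩, hinv⟩ := ih
      set t := alphaSeq (m + 2) α k with ht_def
      obtain ⟨hμ0, hμkey, htμ⟩ := mu_props m ht0 ht1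
      set μ := mu (m + 2) t with hμ_def
      have hsub : m + 2 - 1 = m + 1 := rfl
      have h1t : (0 : ℝ) < 1 - t := by linarith
      set D : ℝ := ((m : ℝ) + 1) * μ + t ^ (m + 2) / μ ^ (m + 1) with hD_def
      have hD : 0 < D :=
        add_pos (mul_pos (by positivity) hμ0) (div_pos (pow_pos ht0 _) (pow_pos hμ0 _))
      have hA1 : alphaSeq (m + 2) α (k + 1) = ((m : ℝ) + 2) * t / D := by
        simp only [alphaSeq, ← ht_def, ← hμ_def, hsub, hD_def]
        push_cast
        ring_nf
      have hDt : ((m : ℝ) + 2) * t < D := by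
        have hr0 : 0 < t / μ := div_pos ht0 hμ0
        have hr1 : t / μ < 1 := (div_lt_one hμ0).2 htμ
        have h := mul_lt_mul_of_pos_right (auxAMGM m hr0 hr1) hμ0
        have hl : ((m : ℝ) + 2) * (t / μ) * μ = ((m : ℝ) + 2) * t := by field_simp
        have hr : (((m : ℝ) + 1) + (t / μ) ^ (m + 2)) * μ = D := by
          rw [hD_def, div_pow]; field_simp; ring
        rwa [hl, hr] at h
      have hαk1 : alphaSeq (m + 2) α (k + 1) ∈ Set.Ioo (0 : ℝ) 1 := by
        rw [hA1]
        exact ⟨div_pos (by positivity) hD, (div_lt_one hD).2 hDt⟩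
      refine ⟨hαk1, fun x hx => ?_⟩
      obtain ⟨hx0, hxα⟩ := hx
      obtain ⟨hf0, hgf, hxf⟩ := hinv x ⟨hx0, hxα⟩
      set f := fSeq (m + 2) α k x with hf_def
      have hfe : fSeq (m + 2) α (k + 1) x =
          (1 / ((m : ℝ) + 2)) * (((m : ℝ) + 1) * μ * f + x / (μ ^ (m + 1) * f ^ (m + 1))) := by
        simp only [fSeq, ← ht_def, ← hμ_def, ← hf_def, hsub]
        push_cast
        ring_nf
      have hY : (0 : ℝ) < μ ^ (m + 1) * f ^ (m + 1) :=
        mul_pos (pow_pos hμ0 _) (pow_pos hf0 _)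
      have hf1 : 0 < fSeq (m + 2) α (k + 1) x := by
        rw [hfe]
        apply mul_pos (by positivity)
        exact add_pos_of_pos_of_nonneg
          (mul_pos (mul_pos (by positivity) hμ0) hf0) (div_nonneg hx0 hY.le)
      refine ⟨hf1, ?_, ?_⟩
      · -- α_{k+1} f_{k+1} ≤ α
        have hfe' : fSeq (m + 2) α (k + 1) x * (μ ^ (m + 1) * f ^ (m + 1)) * ((m : ℝ) + 2) =
            ((m : ℝ) + 1) * μ ^ (m + 2) * f ^ (m + 2) + x := by
          rw [hfe]; field_simp; ring
        have hDY : D * (μ ^ (m + 1) * f ^ (m + 1)) =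
            (((m : ℝ) + 1) * μ ^ (m + 2) + t ^ (m + 2)) * f ^ (m + 1) := by
          rw [hD_def]; field_simp; ring
        have hE' := Eprime_nonneg m ht0 ht1 hα0 hf0 hgf hx0 hxα hxf
        have hid : α * ((((m : ℝ) + 1) * μ ^ (m + 2) + t ^ (m + 2)) * f ^ (m + 1)) * (1 - t)
            - t * (((m : ℝ) + 1) * μ ^ (m + 2) * f ^ (m + 2) + x) * (1 - t) =
            (t - t ^ (m + 2)) * (α * f ^ (m + 1) - t * f ^ (m + 2)) +
              (1 - t) * (α * t ^ (m + 2) * f ^ (m + 1) - t * x) := by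
          linear_combination (α * f ^ (m + 1) - t * f ^ (m + 2)) * hμkey
        have hMAIN : t * (((m : ℝ) + 1) * μ ^ (m + 2) * f ^ (m + 2) + x) ≤
            α * ((((m : ℝ) + 1) * μ ^ (m + 2) + t ^ (m + 2)) * f ^ (m + 1)) := by
          have h' : t * (((m : ℝ) + 1) * μ ^ (m + 2) * f ^ (m + 2) + x) * (1 - t) ≤
              α * ((((m : ℝ) + 1) * μ ^ (m + 2) + t ^ (m + 2)) * f ^ (m + 1)) * (1 - t) := by
            linarith [hE', hid]
          exact le_of_mul_le_mul_right h' h1t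
        rw [hA1, div_mul_eq_mul_div, div_le_iff₀ hD]
        apply le_of_mul_le_mul_right _ hY
        calc ((m : ℝ) + 2) * t * fSeq (m + 2) α (k + 1) x * (μ ^ (m + 1) * f ^ (m + 1))
            = t * (((m : ℝ) + 1) * μ ^ (m + 2) * f ^ (m + 2) + x) := by
              linear_combination t * hfe'
          _ ≤ α * ((((m : ℝ) + 1) * μ ^ (m + 2) + t ^ (m + 2)) * f ^ (m + 1)) := hMAIN
          _ = α * D * (μ ^ (m + 1) * f ^ (m + 1)) := by linear_combination (-α) * hDY
      · -- x ≤ f_{k+1}^(m+2) by AM–GM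
        rcases hx0.eq_or_lt with h0 | hx0'
        · have h9 := pow_nonneg hf1.le (m + 2); linarith [h0.le]
        · set z : ℝ := μ * f with hz_def
          have hz : 0 < z := mul_pos hμ0 hf0
          have hw : ((m : ℝ) + 1) / ((m : ℝ) + 2) + 1 / ((m : ℝ) + 2) = 1 := by
            field_simp
            ring
          have hgm := Real.geom_mean_le_arith_mean2_weighted
            (w₁ := ((m : ℝ) + 1) / ((m : ℝ) + 2)) (w₂ := 1 / ((m : ℝ) + 2))
            (p₁ := z) (p₂ := x / z ^ (m + 1))
            (by positivity) (by positivity) hz.le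
            (div_nonneg hx0 (pow_pos hz (m + 1)).le) hw
          have hL : z ^ (((m : ℝ) + 1) / ((m : ℝ) + 2)) *
              (x / z ^ (m + 1)) ^ ((1 : ℝ) / ((m : ℝ) + 2)) =
              x ^ ((1 : ℝ) / ((m : ℝ) + 2)) := by
            rw [Real.div_rpow hx0 (pow_pos hz _).le,
              ← Real.rpow_natCast z (m + 1), ← Real.rpow_mul hz.le]
            rw [show ((m + 1 : ℕ) : ℝ) * ((1 : ℝ) / ((m : ℝ) + 2)) =
              ((m : ℝ) + 1) / ((m : ℝ) + 2) by push_cast; ring]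
            rw [mul_div_assoc']
            rw [mul_comm, mul_div_assoc, div_self (ne_of_gt (Real.rpow_pos_of_pos hz _)),
              mul_one]
          rw [hL] at hgm
          have hR : ((m : ℝ) + 1) / ((m : ℝ) + 2) * z + 1 / ((m : ℝ) + 2) * (x / z ^ (m + 1)) =
              fSeq (m + 2) α (k + 1) x := by
            rw [hfe, hz_def, mul_pow]
            ring
          rw [hR] at hgm
          have hxe : (x ^ ((1 : ℝ) / ((m : ℝ) + 2))) ^ (m + 2) = x := by
            rw [← Real.rpow_natCast (x ^ ((1 : ℝ) / ((m : ℝ) + 2))) (m + 2),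
              ← Real.rpow_mul hx0]
            rw [show ((1 : ℝ) / ((m : ℝ) + 2)) * ((m + 2 : ℕ) : ℝ) = 1 by
              push_cast; field_simp]
            exact Real.rpow_one x
          calc x = (x ^ ((1 : ℝ) / ((m : ℝ) + 2))) ^ (m + 2) := hxe.symm
            _ ≤ fSeq (m + 2) α (k + 1) x ^ (m + 2) :=
              pow_le_pow_left₀ (Real.rpow_nonneg hx0 _) hgm _

/-- **Lemma 3.** For every `α ∈ (0,1)`, every `k ≥ 0` and every `x ∈ [0, α^p]`,
`0 < f̃_k(x) ≤ α (1 + ε_k)` where `ε_k = (1-α_k)/(1+α_k)`. -/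
theorem ftilde_bounds_near_origin (p : ℕ) (hp : 2 ≤ p)
    (α : ℝ) (hα : α ∈ Set.Ioo (0 : ℝ) 1) (k : ℕ) :
    ∀ x ∈ Set.Icc (0 : ℝ) (α ^ p),
      0 < ftilde p α k x ∧
      ftilde p α k x ≤ α * (1 + (1 - alphaSeq p α k) / (1 + alphaSeq p α k)) := by
  obtain ⟨m, rfl⟩ : ∃ m, p = m + 2 := ⟨p - 2, by omega⟩
  obtain ⟨⟨hk0, hk1⟩, hinv⟩ := inv_lemma m α hα k
  intro x hx
  obtain ⟨hf0, hgf, -⟩ := hinv x hx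
  set t := alphaSeq (m + 2) α k with ht_def
  set f := fSeq (m + 2) α k x with hf_def
  have h1t : (0 : ℝ) < 1 + t := by linarith
  have hα0 := hα.1
  constructor
  · exact mul_pos (div_pos (by linarith) h1t) hf0
  · have hub : α * (1 + (1 - t) / (1 + t)) = 2 * α / (1 + t) := by
      field_simp
      ring
    show 2 * t / (1 + t) * f ≤ α * (1 + (1 - t) / (1 + t))
    rw [hub, div_mul_eq_mul_div, div_le_div_iff₀ h1t h1t]
    nlinarith [mul_le_mul_of_nonneg_right hgf h1t.le]
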